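/- Assume Hypothesis (*) with r = |φ| a prime. If H is a φ-invariant subgroup of S containing the diagonal D = C_S(φ), then either H = D or H = S. -/

import Mathlib

namespace EngelPaper

variable {G : Type*}

/-- The commutator `[a,b] = a⁻¹b⁻¹ab` (left-normed convention of the paper). -/
def pc [Group G] (a b : G) : G := a⁻¹ * b⁻¹ * a * b

/-- The left-normed Engel commutator `[x, g, g, ..., g]` with `g` repeated `n` times. -/
def engel [Group G] (g x : G) : ℕ → G
  | 0 => x
  | n + 1 => pc (engel g x n) g

/-- The subgroup `E_n(g)` generated by all `[x, g, ..., g]` (`g` repeated `n` times), `x ∈ G`. -/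
def Esub [Group G] (g : G) (n : ℕ) : Subgroup G :=
  Subgroup.closure { y | ∃ x : G, y = engel g x n }

/-- The left-normed Engel commutator `[x, α, ..., α]` (`α` repeated `n` times) for an
automorphism `α`, computed in the semidirect product `G⟨α⟩`; it lies in `G` and equals the
value of this function. -/
def engelAut [Group G] (α : MulAut G) (x : G) : ℕ → G
  | 0 => x
  | n + 1 => (engelAut α x n)⁻¹ * α (engelAut α x n)

/-- The subgroup `E_{G,n}(α)` generated by all `[x, α, ..., α]`, `x ∈ G`. -/
def EsubAut [Group G] (α : MulAut G) (n : ℕ) : Subgroup G :=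
  Subgroup.closure { y | ∃ x : G, y = engelAut α x n }

theorem normal_sSup_of_conj_invariant [Group G] {s : Set (Subgroup G)}
    (h : ∀ N ∈ s, ∀ g : G, Subgroup.map (MulAut.conj g).toMonoidHom N ∈ s) :
    (sSup s).Normal := by
  constructor
  intro x hx g
  have hle : sSup s ≤ (sSup s).comap ((MulAut.conj g).toMonoidHom) := by
    refine sSup_le ?_
    intro N hN y hy
    simp only [Subgroup.mem_comap]
    exact le_sSup (h N hN g) ⟨y, hy, rfl⟩
  have := hle hx
  simpa [MulAut.conj_apply] using this

theorem normal_sSup [Group G] {s : Set (Subgroup G)}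
    (h : ∀ N ∈ s, N.Normal) : (sSup s).Normal := by
  constructor
  intro x hx g
  have hle : sSup s ≤ (sSup s).comap ((MulAut.conj g).toMonoidHom) := by
    refine sSup_le ?_
    intro N hN y hy
    simp only [Subgroup.mem_comap, MulAut.conj_apply, MulEquiv.coe_toMonoidHom]
    exact le_sSup hN ((h N hN).conj_mem y hy g)
  have := hle hx
  simpa [MulAut.conj_apply] using this

/-- The Fitting subgroup: the subgroup generated by all nilpotent normal subgroups. -/
def fitting (G : Type*) [Group G] : Subgroup G :=
  sSup { N : Subgroup G | N.Normal ∧ Group.IsNilpotent N }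

theorem fitting_normal (G : Type*) [Group G] : (fitting G).Normal :=
  normal_sSup fun _ hN => hN.1

/-- One step of the Fitting series: the inverse image of the Fitting subgroup of the quotient. -/
def fitStep (G : Type*) [Group G] (N : { N : Subgroup G // N.Normal }) :
    { N : Subgroup G // N.Normal } :=
  letI := N.2
  ⟨Subgroup.comap (QuotientGroup.mk' N.1) (fitting (G ⧸ N.1)),
    (fitting_normal (G ⧸ N.1)).comap _⟩

/-- The Fitting series `F_0(G) = 1`, `F_{k+1}(G)/F_k(G) = F(G/F_k(G))`. -/
def fitSeries (G : Type*) [Group G] (n : ℕ) : Subgroup G :=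
  ((fitStep G)^[n] ⟨⊥, inferInstance⟩).1

/-- The Fitting height: the least `h` with `F_h(G) = G`. -/
noncomputable def fittingHeight (G : Type*) [Group G] : ℕ :=
  sInf { h | fitSeries G h = ⊤ }




/-- A subgroup is subnormal if it can be joined to the whole group
by a chain of successively normal subgroups. -/
def IsSubnormal [Group G] (H : Subgroup G) : Prop :=
  ∃ (n : ℕ) (c : ℕ → Subgroup G), c 0 = H ∧ c n = ⊤ ∧
    ∀ i, c i ≤ c (i + 1) ∧ ∀ x ∈ c (i + 1), ∀ y ∈ c i, x * y * x⁻¹ ∈ c i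

/-- A group is quasisimple if it is perfect and its central quotient
is a nonabelian simple group. -/
def IsQuasisimple (G : Type*) [Group G] : Prop :=
  commutator G = ⊤ ∧
    IsSimpleGroup (G ⧸ Subgroup.center G) ∧
    ∃ a b : G ⧸ Subgroup.center G, a * b ≠ b * a

theorem map_center_eq {H : Type*} [Group G] [Group H] (e : G ≃* H) :
    (Subgroup.center G).map e.toMonoidHom = Subgroup.center H := by
  ext x
  simp only [Subgroup.mem_map, Subgroup.mem_center_iff, MulEquiv.coe_toMonoidHom]
  constructor
  · rintro ⟨y, hy, rfl⟩ h
    obtain ⟨z, rfl⟩ := e.surjective h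
    rw [← map_mul, ← map_mul, hy z]
  · intro hx
    refine ⟨e.symm x, fun z => ?_, e.apply_symm_apply x⟩
    apply e.injective
    rw [map_mul, map_mul, e.apply_symm_apply]
    have := hx (e z)
    rw [this]

theorem isQuasisimple_congr {H : Type*} [Group G] [Group H] (e : G ≃* H)
    (h : IsQuasisimple G) : IsQuasisimple H := by
  obtain ⟨hcomm, hsimp, a, b, hab⟩ := h
  have hcenter : (Subgroup.center G).map e.toMonoidHom = Subgroup.center H := map_center_eq e
  have equot : (G ⧸ Subgroup.center G) ≃* (H ⧸ Subgroup.center H) :=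
    QuotientGroup.congr (Subgroup.center G) (Subgroup.center H) e hcenter
  refine ⟨?_, ?_, equot a, equot b, ?_⟩
  · have h1 : Subgroup.map e.toMonoidHom (commutator G) = commutator H := by
      rw [commutator_def, commutator_def, Subgroup.map_commutator,
        Subgroup.map_top_of_surjective _ e.surjective]
    rw [← h1, hcomm, Subgroup.map_top_of_surjective _ e.surjective]
  · haveI := hsimp
    haveI : Nontrivial (H ⧸ Subgroup.center H) := by
      rcases hsimp.exists_pair_ne with ⟨u, v, huv⟩
      exact ⟨equot u, equot v, fun hh => huv (equot.injective hh)⟩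
    exact IsSimpleGroup.isSimpleGroup_of_surjective equot.toMonoidHom equot.surjective
  · intro hcon
    apply hab
    apply equot.injective
    rw [map_mul, map_mul, hcon]

theorem isSubnormal_map_conj [Group G] {N : Subgroup G} (hN : IsSubnormal N) (w : G) :
    IsSubnormal (N.map (MulAut.conj w).toMonoidHom) := by
  obtain ⟨n, c, h0, hn, hc⟩ := hN
  refine ⟨n, fun i => (c i).map (MulAut.conj w).toMonoidHom, by simp only [h0], ?_, ?_⟩
  · simp only [hn]
    exact Subgroup.map_top_of_surjective _ (MulAut.conj w).surjective
  · intro i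
    refine ⟨Subgroup.map_mono (hc i).1, ?_⟩
    rintro x ⟨x', hx', rfl⟩ y ⟨y', hy', rfl⟩
    refine ⟨x' * y' * x'⁻¹, (hc i).2 x' hx' y' hy', ?_⟩
    simp [map_mul, map_inv]

/-- The generalized Fitting subgroup: the product of the Fitting subgroup and all
subnormal quasisimple subgroups. -/
def genFitting (G : Type*) [Group G] : Subgroup G :=
  fitting G ⊔ sSup { N : Subgroup G | IsSubnormal N ∧ IsQuasisimple N }

theorem genFitting_normal (G : Type*) [Group G] : (genFitting G).Normal := by
  have h2 : (sSup { N : Subgroup G | IsSubnormal N ∧ IsQuasisimple N }).Normal := by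
    apply normal_sSup_of_conj_invariant
    rintro N ⟨hsub, hqs⟩ g
    refine ⟨isSubnormal_map_conj hsub g, ?_⟩
    exact isQuasisimple_congr
      (Subgroup.equivMapOfInjective N _ (MulAut.conj g).injective) hqs
  haveI := fitting_normal G
  haveI := h2
  exact Subgroup.sup_normal _ _


/-- One step of the generalized Fitting series. -/
def genFitStep (G : Type*) [Group G] (N : { N : Subgroup G // N.Normal }) :
    { N : Subgroup G // N.Normal } :=
  letI := N.2
  ⟨Subgroup.comap (QuotientGroup.mk' N.1) (genFitting (G ⧸ N.1)),
    (genFitting_normal (G ⧸ N.1)).comap _⟩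

/-- The generalized Fitting series `F*_0(G) = 1`, `F*_{i+1}(G)/F*_i(G) = F*(G/F*_i(G))`. -/
def genFitSeries (G : Type*) [Group G] (n : ℕ) : Subgroup G :=
  ((genFitStep G)^[n] ⟨⊥, inferInstance⟩).1

/-- The generalized Fitting height: the least `h` with `F*_h(G) = G`. -/
noncomputable def genFittingHeight (G : Type*) [Group G] : ℕ :=
  sInf { h | genFitSeries G h = ⊤ }

/-- The soluble radical: the subgroup generated by all soluble normal subgroups. -/
def solRadical (G : Type*) [Group G] : Subgroup G :=
  sSup { N : Subgroup G | N.Normal ∧ IsSolvable N }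

theorem solRadical_normal (G : Type*) [Group G] : (solRadical G).Normal :=
  normal_sSup fun _ hN => hN.1

/-- A group is a nonabelian simple group. -/
def IsNonabelianSimple (G : Type*) [Group G] : Prop :=
  IsSimpleGroup G ∧ ∃ a b : G, a * b ≠ b * a

/-- A group is the (internal) direct product of finitely many nonabelian simple subgroups. -/
def IsProdOfSimples (Q : Type*) [Group Q] : Prop :=
  ∃ (k : ℕ) (H : Fin k → Subgroup Q),
    (∀ i, (H i).Normal) ∧ (∀ i, IsNonabelianSimple (H i)) ∧
    iSup H = ⊤ ∧ iSupIndep H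

/-- For `A ≤ B`, the factor `B/A` is soluble (stated for every proof that the
corresponding subgroup is normal). -/
def SolubleFactor [Group G] (A B : Subgroup G) : Prop :=
  ∀ h : (A.subgroupOf B).Normal, letI := h; IsSolvable (B ⧸ A.subgroupOf B)

/-- For `A ≤ B`, the factor `B/A` is a direct product of nonabelian simple groups. -/
def SimpleProdFactor [Group G] (A B : Subgroup G) : Prop :=
  ∀ h : (A.subgroupOf B).Normal, letI := h; IsProdOfSimples (B ⧸ A.subgroupOf B)

/-- For `A ≤ B`, the factor `B/A` is nonabelian simple. -/
def NonabelianSimpleFactor [Group G] (A B : Subgroup G) : Prop :=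
  ∀ h : (A.subgroupOf B).Normal, letI := h; IsNonabelianSimple (B ⧸ A.subgroupOf B)

/-- For `A ≤ B, B'`, the factors `B/A` and `B'/A` are isomorphic. -/
def IsoFactor [Group G] (A B B' : Subgroup G) : Prop :=
  ∀ (h : (A.subgroupOf B).Normal) (h' : (A.subgroupOf B').Normal),
    letI := h; letI := h'
    Nonempty ((B ⧸ A.subgroupOf B) ≃* (B' ⧸ A.subgroupOf B'))

open scoped Classical in
/-- The nonsoluble length `λ(G)`: the minimum number of nonsoluble factors in a normal
series each of whose factors either is soluble or is a direct product of nonabelian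
simple groups. -/
noncomputable def nonsolLength (G : Type*) [Group G] : ℕ :=
  sInf { k | ∃ (n : ℕ) (c : ℕ → Subgroup G), c 0 = ⊥ ∧ c n = ⊤ ∧
    (∀ i, c i ≤ c (i + 1)) ∧ (∀ i, (c i).Normal) ∧
    (∀ i < n, SolubleFactor (c i) (c (i + 1)) ∨ SimpleProdFactor (c i) (c (i + 1))) ∧
    k = ((Finset.range n).filter fun i => ¬ SolubleFactor (c i) (c (i + 1))).card }

/-- `R_i(G)`: the maximal normal subgroup of `G` of nonsoluble length at most `i`. -/
noncomputable def Rsub (G : Type*) [Group G] (i : ℕ) : Subgroup G :=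
  sSup { N : Subgroup G | N.Normal ∧ nonsolLength N ≤ i }

/-- One step of the upper nonsoluble series: from `R_{i-1}` to `L_i`
(the inverse image of the generalized Fitting subgroup of the quotient). -/
def unsStepL (G : Type*) [Group G] (R : { N : Subgroup G // N.Normal }) :
    { N : Subgroup G // N.Normal } :=
  letI := R.2
  ⟨Subgroup.comap (QuotientGroup.mk' R.1) (genFitting (G ⧸ R.1)),
    (genFitting_normal (G ⧸ R.1)).comap _⟩

/-- One step of the upper nonsoluble series: from `L_i` to `R_i`
(the inverse image of the soluble radical of the quotient). -/
def unsStepR (G : Type*) [Group G] (L : { N : Subgroup G // N.Normal }) :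
    { N : Subgroup G // N.Normal } :=
  letI := L.2
  ⟨Subgroup.comap (QuotientGroup.mk' L.1) (solRadical (G ⧸ L.1)),
    (solRadical_normal (G ⧸ L.1)).comap _⟩

/-- The terms `R_i` of the upper nonsoluble series, bundled with normality. -/
def unsRAux (G : Type*) [Group G] (n : ℕ) : { N : Subgroup G // N.Normal } :=
  (fun P => unsStepR G (unsStepL G P))^[n] ⟨solRadical G, solRadical_normal G⟩

/-- The terms `R_i` of the upper nonsoluble series of `G`:
`R_0` is the soluble radical and `R_i/L_i` is the soluble radical of `G/L_i`. -/
def unsRsub (G : Type*) [Group G] (n : ℕ) : Subgroup G := (unsRAux G n).1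

/-- The terms `L_i` of the upper nonsoluble series of `G`: `L_0 = 1` and
`L_i/R_{i-1} = F*(G/R_{i-1})` for `i ≥ 1`. -/
def unsLsub (G : Type*) [Group G] : ℕ → Subgroup G
  | 0 => ⊥
  | n + 1 => (unsStepL G (unsRAux G n)).1

/-- `T` is (the full inverse image in `G` of) one of the simple factors of the
section `U_i = L_i/R_{i-1}` of the upper nonsoluble series (`i ≥ 1`): it satisfies
`R_{i-1} ≤ T ≤ L_i`, it is normalized by `L_i`, and `T/R_{i-1}` is nonabelian simple. -/
def IsSimpleFactor (G : Type*) [Group G] (i : ℕ) (T : Subgroup G) : Prop :=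
  unsRsub G (i - 1) ≤ T ∧ T ≤ unsLsub G i ∧
  (∀ x ∈ unsLsub G i, ∀ t ∈ T, x * t * x⁻¹ ∈ T) ∧
  NonabelianSimpleFactor (unsRsub G (i - 1)) T

/-- The kernel `K_i` of the permutation action of `G` by conjugation on the set of
simple factors of the section `U_i` of the upper nonsoluble series. -/
def unsKernel (G : Type*) [Group G] (i : ℕ) : Subgroup G where
  carrier := { w | ∀ T : Subgroup G, IsSimpleFactor G i T → ∀ x : G, x ∈ T ↔ w * x * w⁻¹ ∈ T }
  one_mem' := by intro T _ x; simp
  mul_mem' := by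
    intro a b ha hb T hT x
    have h1 := hb T hT x
    have h2 := ha T hT (b * x * b⁻¹)
    have h3 : a * (b * x * b⁻¹) * a⁻¹ = (a * b) * x * (a * b)⁻¹ := by group
    rw [h3] at h2
    exact h1.trans h2
  inv_mem' := by
    intro a ha T hT x
    have h1 := ha T hT (a⁻¹ * x * a)
    have h2 : a * (a⁻¹ * x * a) * a⁻¹ = x := by group
    rw [h2] at h1
    have h3 : a⁻¹ * x * a⁻¹⁻¹ = a⁻¹ * x * a := by rw [inv_inv]
    rw [h3]
    exact h1.symm

/-- The lexicographic order on positive integers from the paper: `a ≺ b` if for some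
prime `p` the multiplicities of all primes `q < p` agree in `a` and `b` and the
multiplicity of `p` in `a` is smaller than in `b`. -/
def lexPrimeLt (a b : ℕ) : Prop :=
  ∃ p : ℕ, p.Prime ∧ (∀ q < p, q.Prime → a.factorization q = b.factorization q) ∧
    a.factorization p < b.factorization p


/-- The subgroup of a direct product consisting of the elements supported on `J`. -/
def suppSubgroup {ι : Type*} {Δ : ι → Type*} [∀ i, Group (Δ i)] (J : Set ι) :
    Subgroup (∀ i, Δ i) where
  carrier := { x | ∀ i, i ∉ J → x i = 1 }
  one_mem' := fun _ _ => rfl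
  mul_mem' := by
    intro a b ha hb i hi
    have := ha i hi; have := hb i hi
    simp_all [Pi.mul_apply]
  inv_mem' := by
    intro a ha i hi
    have := ha i hi
    simp_all [Pi.inv_apply]

/-- The `i`-th factor `S_i` of the direct product `S = S_1 × ⋯ × S_r`. -/
def factorSub {ι : Type*} {Δ : ι → Type*} [∀ i, Group (Δ i)] (i : ι) :
    Subgroup (∀ j, Δ j) :=
  suppSubgroup {i}

/-- The homomorphism of a direct product killing all coordinates outside `I`. -/
def restrictSupp {ι : Type*} {Δ : ι → Type*} [∀ i, Group (Δ i)] (I : Set ι)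
    [DecidablePred (· ∈ I)] : (∀ j, Δ j) →* (∀ j, Δ j) where
  toFun x j := if j ∈ I then x j else 1
  map_one' := by funext j; by_cases h : j ∈ I <;> simp [h]
  map_mul' := by
    intro a b; funext j; by_cases h : j ∈ I <;> simp [h]

/-- The fixed-point subgroup (in `S`) of an automorphism `φ`;
for `φ` as in Hypothesis (*), this is the diagonal `D = C_S(φ)`. -/
def fixedSub {S : Type*} [Group S] (φ : MulAut S) : Subgroup S where
  carrier := { x | φ x = x }
  one_mem' := map_one φ
  mul_mem' := by
    intro a b ha hb
    simp only [Set.mem_setOf_eq, map_mul] at *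
    rw [ha, hb]
  inv_mem' := by
    intro a ha
    simp only [Set.mem_setOf_eq, map_inv] at *
    rw [ha]

/-- The `d(I)`-subgroup determined by `φ` and a set of indices `I`: the diagonal
(with respect to `φ`) in the product of the factors `S_i`, `i ∈ I`; equivalently, the
image of the full diagonal `D = C_S(φ)` under the projection onto the coordinates in `I`. -/
def dSubgroup {r : ℕ} {Δ : Type*} [Group Δ] (φ : MulAut (Fin r → Δ)) (I : Finset (Fin r)) :
    Subgroup (Fin r → Δ) :=
  Subgroup.map (restrictSupp (↑I : Set (Fin r))) (fixedSub φ)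

/-- `K` is a `d`-subgroup (with respect to `φ`): a `d(I)`-subgroup for some nonempty `I`. -/
def IsDSubgroup {r : ℕ} {Δ : Type*} [Group Δ] (φ : MulAut (Fin r → Δ))
    (K : Subgroup (Fin r → Δ)) : Prop :=
  ∃ I : Finset (Fin r), I.Nonempty ∧ K = dSubgroup φ I

end EngelPaper

section Statements

universe u

open EngelPaper

/-!
The diagonal `D` projects onto every coordinate, so for `D ≤ H` the image under `π_j` of
`H ∩ ker π_i` is normal in the simple group `Δ`: either the `i`-th coordinate determines the
`j`-th one on `H`, or `H` has elements vanishing at `i` with arbitrary `j`-th coordinate.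
The first relation is invariant under the translation `i ↦ i + 1` induced by `φ`; if it holds
for one pair `i ≠ j`, primality of `r` makes the `0`-th coordinate determine all the others,
and then `H = D`. Otherwise iterated commutators, using that `Δ` has trivial centre, produce
nontrivial elements of `H` supported on a single factor; they form a normal subgroup of that
factor, hence all of it, and `H = S`.
-/

theorem EngelPaper.IsNonabelianSimple.center_eq_bot {G : Type*} [Group G]
    (h : IsNonabelianSimple G) : Subgroup.center G = ⊥ := by
  obtain ⟨hsimple, a, b, hab⟩ := h
  refine (hsimple.eq_bot_or_eq_top_of_normal _ inferInstance).resolve_right fun htop => ?_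
  exact hab (Subgroup.mem_center_iff.1 (htop ▸ Subgroup.mem_top a) b).symm

theorem Subgroup.eq_of_le_of_map_le_of_disjoint_ker {G K : Type*} [Group G] [Group K]
    (f : G →* K) {D H : Subgroup G} (hDH : D ≤ H) (hmap : H.map f ≤ D.map f)
    (hker : Disjoint H f.ker) : H = D := by
  refine le_antisymm (fun x hx => ?_) hDH
  obtain ⟨d, hd, hdx⟩ := hmap ⟨x, hx, rfl⟩
  have hxd : x * d⁻¹ = 1 :=
    Subgroup.disjoint_def.1 hker (H.mul_mem hx (H.inv_mem (hDH hd))) (by simp [hdx])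
  rwa [mul_inv_eq_one.1 hxd]

theorem AddSubmonoid.eq_top_of_prime_card {A : Type*} [AddGroup A] [Finite A]
    (hp : (Nat.card A).Prime) {M : AddSubmonoid A} {c : A} (hc0 : c ≠ 0) (hc : c ∈ M) :
    M = ⊤ := by
  have := Fact.mk hp
  refine eq_top_iff.2 fun k _ => AddSubmonoid.multiples_le.2 hc ?_
  rw [mem_multiples_iff_mem_zmultiples, zmultiples_eq_top_of_prime_card rfl hc0]
  exact AddSubgroup.mem_top k

theorem MulAut.apply_prod_range_pow_apply_eq {M : Type*} [Monoid M] (φ : MulAut M) (z : M)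
    (n : ℕ) (hper : (φ ^ (n + 1)) z = z) (hcomm : ∀ k < n, Commute z ((φ ^ (k + 1)) z)) :
    φ ((List.range (n + 1)).map fun k => (φ ^ k) z).prod =
      ((List.range (n + 1)).map fun k => (φ ^ k) z).prod := by
  have hshift : (φ ∘ fun k => (φ ^ k) z) = fun k => (φ ^ (k + 1)) z := by
    funext k
    simp [pow_succ']
  rw [map_list_prod, List.map_map, hshift, List.prod_range_succ, List.prod_range_succ', hper]
  refine (Commute.list_prod_right _ _ fun x hx => ?_).symm.eq
  obtain ⟨k, hk, rfl⟩ := List.mem_map.1 hx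
  exact hcomm k (List.mem_range.1 hk)

section FactorsOfPi

open scoped commutatorElement

variable {ι : Type*} {G : ι → Type*} [∀ i, Group (G i)]

theorem mulSingle_mem_factorSub [DecidableEq ι] (i : ι) (u : G i) :
    Pi.mulSingle i u ∈ factorSub i :=
  fun _ hk => Pi.mulSingle_eq_of_ne hk u

theorem commute_of_mem_factorSub {i j : ι} (hij : i ≠ j) {x y : ∀ k, G k}
    (hx : x ∈ factorSub i) (hy : y ∈ factorSub j) : Commute x y := by
  show x * y = y * x
  funext k
  by_cases hk : k = i
  · simp [hy k (hk ▸ hij)]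
  · simp [hx k hk]

theorem apply_eq_one_iff_of_maps_factorSub [Finite ι] [DecidableEq ι]
    {ψ : (∀ i, G i) →* ∀ i, G i} (hψ : Function.Injective ψ) {σ : ι → ι}
    (hσ : Function.Injective σ) (hmaps : ∀ i, ∀ x ∈ factorSub i, ψ x ∈ factorSub (σ i))
    {x : ∀ i, G i} {i : ι} : ψ x (σ i) = 1 ↔ x i = 1 := by
  have forward : ∀ y : ∀ i, G i, y i = 1 → ψ y (σ i) = 1 := by
    intro y hy
    refine Subgroup.pi_mem_of_mulSingle_mem (H := (Pi.evalMonoidHom G (σ i)).ker.comap ψ) y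
      fun k => ?_
    by_cases hk : k = i
    · subst hk
      simp [hy]
    · exact hmaps k _ (mulSingle_mem_factorSub k (y k)) (σ i) (hσ.ne (Ne.symm hk))
  refine ⟨fun h => ?_, forward x⟩
  -- `ψ s ∈ S_{σ i}` vanishes at `σ i`, hence is trivial, for `s` the `i`-th component of `x`.
  set s := Pi.mulSingle i (x i)
  have hs : ψ s (σ i) = 1 := by
    have hsplit : ψ x = ψ s * ψ (s⁻¹ * x) := by rw [← map_mul, mul_inv_cancel_left]
    have hrest : ψ (s⁻¹ * x) (σ i) = 1 := forward _ (by simp [s])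
    have hcoord := congrFun hsplit (σ i)
    rw [Pi.mul_apply, hrest, mul_one, h] at hcoord
    exact hcoord.symm
  have hs1 : ψ s = 1 := by
    funext k
    by_cases hk : k = σ i
    · subst hk
      exact hs
    · exact hmaps i s (mulSingle_mem_factorSub i (x i)) k hk
  simpa [s] using congrFun ((map_eq_one_iff ψ hψ).1 hs1) i

/-- As `H` is a subgroup, this says that on `H` the `i`-th coordinate determines the `j`-th. -/
def CoordDetermines (H : Subgroup (∀ i, G i)) (i j : ι) : Prop :=
  ∀ x ∈ H, x i = 1 → x j = 1

theorem CoordDetermines.trans {H : Subgroup (∀ i, G i)} {i j k : ι}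
    (hij : CoordDetermines H i j) (hjk : CoordDetermines H j k) : CoordDetermines H i k :=
  fun x hx h => hjk x hx (hij x hx h)

variable {H : Subgroup (∀ i, G i)}

/-- The image of `H ∩ ker π_i` under `π_j` is normal in `G j`, hence trivial or everything. -/
theorem coordDetermines_or_forall_exists {j : ι} [IsSimpleGroup (G j)]
    (hsurj : ∀ v : G j, ∃ d ∈ H, d j = v) (i : ι) :
    CoordDetermines H i j ∨ ∀ v : G j, ∃ y ∈ H, y i = 1 ∧ y j = v := by
  set P := (H ⊓ (Pi.evalMonoidHom G i).ker).map (Pi.evalMonoidHom G j)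
  have hP : P.Normal := by
    refine ⟨fun u hu v => ?_⟩
    obtain ⟨y, ⟨hyH, hyi⟩, rfl⟩ := hu
    obtain ⟨d, hd, rfl⟩ := hsurj v
    refine ⟨d * y * d⁻¹, ⟨H.mul_mem (H.mul_mem hd hyH) (H.inv_mem hd), ?_⟩, rfl⟩
    have hyi' : y i = 1 := hyi
    simp [hyi']
  rcases IsSimpleGroup.eq_bot_or_eq_top_of_normal P hP with hbot | htop
  · left
    intro x hx hxi
    exact (Subgroup.mem_bot).1 (hbot ▸ Subgroup.mem_map_of_mem _ ⟨hx, hxi⟩)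
  · right
    intro v
    obtain ⟨y, ⟨hyH, hyi⟩, hyv⟩ := htop ▸ Subgroup.mem_top v
    exact ⟨y, hyH, hyi, hyv⟩

theorem normal_comap_mulSingle [DecidableEq ι] {j : ι} (hsurj : ∀ v : G j, ∃ d ∈ H, d j = v) :
    (H.comap (MonoidHom.mulSingle G j)).Normal := by
  refine ⟨fun u hu v => ?_⟩
  obtain ⟨d, hd, rfl⟩ := hsurj v
  have hconj : Pi.mulSingle j (d j * u * (d j)⁻¹) = d * Pi.mulSingle j u * d⁻¹ := by
    funext k
    by_cases hk : k = j
    · subst hk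
      simp
    · simp [Pi.mulSingle_eq_of_ne hk]
  show Pi.mulSingle j _ ∈ H
  rw [hconj]
  exact H.mul_mem (H.mul_mem hd hu) (H.inv_mem hd)

/-- Commutators with elements of `H` that vanish at `i` but not at `j` kill the coordinates in `s`
one at a time, while the trivial centre of `G j` keeps the `j`-th coordinate nontrivial. -/
theorem exists_mem_apply_ne_one_of_forall_exists [DecidableEq ι] {j : ι}
    (hcenter : Subgroup.center (G j) = ⊥)
    (hsep : ∀ i, i ≠ j → ∀ v : G j, ∃ y ∈ H, y i = 1 ∧ y j = v) {m : ∀ i, G i} (hm : m ∈ H)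
    (hmj : m j ≠ 1) (s : Finset ι) (hs : j ∉ s) :
    ∃ m' ∈ H, m' j ≠ 1 ∧ ∀ i ∈ s, m' i = 1 := by
  induction s using Finset.induction_on with
  | empty => exact ⟨m, hm, hmj, by simp⟩
  | insert i s hi ih =>
    obtain ⟨hij, hjs⟩ : i ≠ j ∧ j ∉ s := by
      simp only [Finset.mem_insert, not_or] at hs
      exact ⟨Ne.symm hs.1, hs.2⟩
    obtain ⟨m', hm', hm'j, hm's⟩ := ih hjs
    obtain ⟨v, hv⟩ : ∃ v, ¬Commute (m' j) v := by
      by_contra! hcomm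
      refine hm'j ((Subgroup.mem_bot).1 (hcenter ▸ Subgroup.mem_center_iff.2 ?_))
      exact fun g => (hcomm g).symm.eq
    obtain ⟨y, hy, hyi, hyj⟩ := hsep i hij v
    have hcoord : ∀ k, ⁅m', y⁆ k = ⁅m' k, y k⁆ := fun _ => rfl
    refine ⟨⁅m', y⁆, ?_, ?_, ?_⟩
    · rw [commutatorElement_def]
      exact H.mul_mem (H.mul_mem (H.mul_mem hm' hy) (H.inv_mem hm')) (H.inv_mem hy)
    · rwa [hcoord, hyj, Ne, commutatorElement_eq_one_iff_commute]
    · intro k hk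
      rcases Finset.mem_insert.1 hk with rfl | hk
      · rw [hcoord, hyi, commutatorElement_one_right]
      · rw [hcoord, hm's k hk, commutatorElement_one_left]

theorem eq_top_of_forall_exists_mem_apply_eq_one [Finite ι] [DecidableEq ι]
    [∀ i, IsSimpleGroup (G i)] (hcenter : ∀ i, Subgroup.center (G i) = ⊥)
    (hsurj : ∀ j, ∀ v : G j, ∃ d ∈ H, d j = v)
    (hsep : ∀ i j, i ≠ j → ∀ v : G j, ∃ y ∈ H, y i = 1 ∧ y j = v) : H = ⊤ := by
  have := Fintype.ofFinite ι
  refine eq_top_iff.2 fun x _ => Subgroup.pi_mem_of_mulSingle_mem x fun j => ?_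
  set K := H.comap (MonoidHom.mulSingle G j)
  obtain ⟨g, hg⟩ := exists_ne (1 : G j)
  obtain ⟨m, hm, rfl⟩ := hsurj j g
  obtain ⟨m', hm', hm'j, hm'1⟩ := exists_mem_apply_ne_one_of_forall_exists (hcenter j)
    (fun i hi => hsep i j hi) hm hg _ (Finset.notMem_erase j Finset.univ)
  have hm'K : m' j ∈ K := by
    show Pi.mulSingle j (m' j) ∈ H
    convert hm'
    funext k
    by_cases hk : k = j
    · subst hk
      simp
    · simp [Pi.mulSingle_eq_of_ne hk, hm'1 k (Finset.mem_erase.2 ⟨hk, Finset.mem_univ k⟩)]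
  have hKtop : K = ⊤ := (IsSimpleGroup.eq_bot_or_eq_top_of_normal K
    (normal_comap_mulSingle (hsurj j))).resolve_left fun hbot =>
      hm'j ((Subgroup.mem_bot).1 (hbot ▸ hm'K))
  show x j ∈ K
  rw [hKtop]
  exact Subgroup.mem_top (x j)

end FactorsOfPi

section CyclicShift

open Fin.NatCast

variable {Δ : Type*} [Group Δ] {r : ℕ} [NeZero r] {φ : MulAut (Fin r → Δ)}
  (hφ : ∀ i, ∀ x ∈ factorSub (Δ := fun _ : Fin r => Δ) i, φ x ∈ factorSub (i + 1))
include hφ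

theorem pow_apply_mem_factorSub (n : ℕ) {i : Fin r} {x : Fin r → Δ}
    (hx : x ∈ factorSub (Δ := fun _ : Fin r => Δ) i) :
    (φ ^ n) x ∈ factorSub (Δ := fun _ : Fin r => Δ) (i + n) := by
  induction n with
  | zero => simpa using hx
  | succ n ih =>
    rw [pow_succ', MulAut.mul_apply, Nat.cast_succ, ← add_assoc]
    exact hφ _ _ ih

/-- The element `z · φ z ⋯ φ^(r-1) z` with `z = Pi.mulSingle i u` is fixed by `φ`, and since the
`φ^k z` with `0 < k < r` live in factors other than `S_i`, its `i`-th coordinate is `u`. -/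
theorem exists_mem_fixedSub_apply_eq (hpow : φ ^ r = 1) (i : Fin r) (u : Δ) :
    ∃ d ∈ fixedSub φ, d i = u := by
  obtain ⟨n, rfl⟩ : ∃ n, r = n + 1 := Nat.exists_eq_succ_of_ne_zero (NeZero.ne r)
  set z : Fin (n + 1) → Δ := Pi.mulSingle i u
  have hz : z ∈ factorSub (Δ := fun _ : Fin (n + 1) => Δ) i :=
    mulSingle_mem_factorSub (G := fun _ : Fin (n + 1) => Δ) i u
  have hne : ∀ k < n, i + ((k + 1 : ℕ) : Fin (n + 1)) ≠ i := fun k hk =>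
    add_ne_left.2 (Fin.natCast_eq_zero.not.2 (Nat.not_dvd_of_pos_of_lt k.succ_pos (by omega)))
  have hmem : ∀ k < n, (φ ^ (k + 1)) z ∈ factorSub (Δ := fun _ : Fin (n + 1) => Δ)
      (i + ((k + 1 : ℕ) : Fin (n + 1))) := fun k _ => pow_apply_mem_factorSub hφ _ hz
  refine ⟨_, φ.apply_prod_range_pow_apply_eq z n (by rw [hpow]; rfl)
    fun k hk => commute_of_mem_factorSub (hne k hk).symm hz (hmem k hk), ?_⟩
  rw [List.prod_range_succ', Pi.mul_apply, Pi.list_prod_apply, List.prod_eq_one]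
  · simp [z]
  · simp only [List.map_map, List.mem_map, List.mem_range]
    rintro _ ⟨k, hk, rfl⟩
    exact hmem k hk i (hne k hk).symm

theorem apply_add_one_eq_one_iff {x : Fin r → Δ} {i : Fin r} : φ x (i + 1) = 1 ↔ x i = 1 :=
  apply_eq_one_iff_of_maps_factorSub (ψ := φ.toMonoidHom) φ.injective (add_left_injective 1) hφ

variable {H : Subgroup (Fin r → Δ)} (hinv : H ≤ H.map φ.toMonoidHom)
include hinv

theorem CoordDetermines.add_right {i j : Fin r} (h : CoordDetermines H i j) (a : Fin r) :
    CoordDetermines H (i + a) (j + a) := by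
  have step : ∀ i j, CoordDetermines H i j → CoordDetermines H (i + 1) (j + 1) := by
    intro i j h x hx hxi
    obtain ⟨y, hy, rfl⟩ := hinv hx
    exact (apply_add_one_eq_one_iff hφ).2 (h y hy ((apply_add_one_eq_one_iff hφ).1 hxi))
  have hnat : ∀ n : ℕ, CoordDetermines H (i + n) (j + n) := by
    intro n
    induction n with
    | zero => simpa using h
    | succ n ih => simpa [Nat.cast_succ, add_assoc] using step _ _ ih
  simpa using hnat a.val

/-- The `k` with `CoordDetermines H 0 k` form a submonoid of `Fin r`, which is all of `Fin r`
once it contains a nonzero element, `r` being prime. -/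
theorem CoordDetermines.zero_of_prime (hrp : r.Prime) {c : Fin r} (hc0 : c ≠ 0)
    (hc : CoordDetermines H 0 c) (k : Fin r) : CoordDetermines H 0 k := by
  let M : AddSubmonoid (Fin r) :=
    { carrier := {k | CoordDetermines H 0 k}
      zero_mem' := fun _ _ h => h
      add_mem' := fun {a b} ha hb => by
        have hab := hb.add_right hφ hinv a
        rw [zero_add, add_comm] at hab
        exact ha.trans hab }
  have hM : M = ⊤ := AddSubmonoid.eq_top_of_prime_card (by rwa [Nat.card_fin]) hc0 hc
  exact (hM ▸ AddSubmonoid.mem_top k : k ∈ M)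

end CyclicShift

theorem stmt10_general {Δ : Type u} [Group Δ] (hΔ : IsNonabelianSimple Δ)
    (r : ℕ) [NeZero r] (hrp : r.Prime) (φ : MulAut (Fin r → Δ)) (hord : orderOf φ = r)
    (hperm : ∀ i : Fin r,
      Subgroup.map φ.toMonoidHom (factorSub (Δ := fun _ : Fin r => Δ) i) = factorSub (i + 1))
    (H : Subgroup (Fin r → Δ)) (hinv : Subgroup.map φ.toMonoidHom H = H)
    (hD : fixedSub φ ≤ H) :
    H = fixedSub φ ∨ H = ⊤ := by
  have hφ : ∀ i, ∀ x ∈ factorSub (Δ := fun _ : Fin r => Δ) i, φ x ∈ factorSub (i + 1) :=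
    fun i x hx => hperm i ▸ Subgroup.mem_map_of_mem φ.toMonoidHom hx
  have hdiag : ∀ i u, ∃ d ∈ fixedSub φ, d i = u :=
    exists_mem_fixedSub_apply_eq hφ (orderOf_dvd_iff_pow_eq_one.1 (dvd_of_eq hord))
  have hsurj : ∀ i u, ∃ d ∈ H, d i = u := fun i u =>
    (hdiag i u).imp fun _ hd => ⟨hD hd.1, hd.2⟩
  by_cases hdet : ∃ c ≠ 0, CoordDetermines H 0 c
  · left
    obtain ⟨c, hc0, hc⟩ := hdet
    refine Subgroup.eq_of_le_of_map_le_of_disjoint_ker (Pi.evalMonoidHom _ 0) hD ?_ <|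
      Subgroup.disjoint_def.2 fun hx hx0 =>
        funext fun k => hc.zero_of_prime hφ hinv.ge hrp hc0 k _ hx (MonoidHom.mem_ker.1 hx0)
    rintro _ ⟨x, -, rfl⟩
    exact hdiag 0 (x 0)
  · right
    push Not at hdet
    have := hΔ.1
    refine eq_top_of_forall_exists_mem_apply_eq_one (fun _ => hΔ.center_eq_bot) hsurj
      fun i j hij => ?_
    refine (coordDetermines_or_forall_exists (G := fun _ : Fin r => Δ) (hsurj j) i).resolve_left
      fun hij' => hdet (j - i) (sub_ne_zero.2 hij.symm) ?_
    simpa [sub_eq_add_neg] using hij'.add_right hφ hinv.ge (-i)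

/-- **Lemma 3.7.** Under Hypothesis (*) with `r = |φ|` prime, a `φ`-invariant subgroup of `S`
containing the diagonal `D = C_S(φ)` is either `D` or `S`. -/
theorem stmt10 {Δ : Type u} [Group Δ] [Finite Δ] (hΔ : IsNonabelianSimple Δ)
    (r : ℕ) [NeZero r] (hrp : r.Prime) (φ : MulAut (Fin r → Δ)) (hord : orderOf φ = r)
    (hperm : ∀ i : Fin r,
      Subgroup.map φ.toMonoidHom (factorSub (Δ := fun _ : Fin r => Δ) i) = factorSub (i + 1))
    (H : Subgroup (Fin r → Δ)) (hinv : Subgroup.map φ.toMonoidHom H = H)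
    (hD : fixedSub φ ≤ H) :
    H = fixedSub φ ∨ H = ⊤ :=
  stmt10_general hΔ r hrp φ hord hperm H hinv hD

end Statements
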